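/- Let X ⊂ ℝ^d be compact with vol(X) > 0. Any point sequence generated by the greedy-packing algorithm is MR-optimal: its uniformity constant sup_{n≥2} MR(X_n) equals 2, and this is the minimum possible uniformity constant over all point sequences in X. -/

import Mathlib

open Metric Set MeasureTheory

/-- Distance from a point `x` to the nearest point of the design `D`. -/
noncomputable def minDist {E : Type*} [NormedAddCommGroup E] (D : Finset E) (x : E) : ℝ :=
  sInf ((fun p => dist x p) '' (D : Set E))

/-- Fill distance (covering radius) of the design `D` for the set `A`:
`CR_A(D) = sup_{x ∈ A} min_{p ∈ D} ‖x - p‖`. -/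
noncomputable def fillDist {E : Type*} [NormedAddCommGroup E] (A : Set E) (D : Finset E) : ℝ :=
  sSup ((fun x => minDist D x) '' A)

/-- Separation radius of the design `D`:
`SR(D) = (1/2) min_{p ≠ q ∈ D} ‖p - q‖`. -/
noncomputable def sepRad {E : Type*} [NormedAddCommGroup E] (D : Finset E) : ℝ :=
  (1 / 2) * sInf ((fun p : E × E => dist p.1 p.2) '' {p | p.1 ∈ D ∧ p.2 ∈ D ∧ p.1 ≠ p.2})

/-- Mesh-ratio of the design `D` for the set `A`: `MR(D) = CR_A(D) / SR(D)`. -/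
noncomputable def meshRatio {E : Type*} [NormedAddCommGroup E] (A : Set E) (D : Finset E) : ℝ :=
  fillDist A D / sepRad D

/-- The nested design consisting of the first `n` points of the sequence `x`. -/
noncomputable def design {E : Type*} (x : ℕ → E) (n : ℕ) : Finset E :=
  letI := Classical.decEq E
  (Finset.range n).image x

/-!
A greedy point lies at distance exactly `CR(Xⱼ)` from the earlier points, and fill distances
decrease along the sequence, so every pair of points of `Xₙ` is at least `CR(Xₙ)` apart; hence
`SR(Xₙ) ≥ CR(Xₙ) / 2`, i.e. `MR(Xₙ) ≤ 2`.

Conversely, if `MR(Xₙ) ≤ b < 2` for all `n ≥ 2`, the new point `yₙ` is within `CR(Xₙ)` of `Xₙ`,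
so `CR(Xₙ₊₁) ≤ b · SR(Xₙ₊₁) ≤ (b / 2) · CR(Xₙ)` and the fill distance decays geometrically. But
the `n` balls of radius `CR(Xₙ)` around the design points cover `S`, so
`vol(S) ≤ n · CR(Xₙ)^d · vol(B(0, 1))`, which then tends to `0`, contradicting `vol(S) > 0`.
-/

open Filter Topology

theorem tendsto_succ_mul_pow_of_lt_one {r : ℝ} (h₀ : 0 ≤ r) (h₁ : r < 1) :
    Tendsto (fun n : ℕ => ((n : ℝ) + 1) * r ^ n) atTop (𝓝 0) := by
  simpa [add_mul] using
    (tendsto_self_mul_const_pow_of_lt_one h₀ h₁).add (tendsto_pow_atTop_nhds_zero_of_lt_one h₀ h₁)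

section Design

variable {E : Type*}

theorem mem_design {x : ℕ → E} {n : ℕ} {p : E} : p ∈ design x n ↔ ∃ i < n, x i = p := by
  simp [design]

theorem apply_mem_design {x : ℕ → E} {i n : ℕ} (h : i < n) : x i ∈ design x n :=
  mem_design.2 ⟨i, h, rfl⟩

theorem apply_notMem_design {x : ℕ → E} (hx : Function.Injective x) (n : ℕ) :
    x n ∉ design x n := by
  rintro hn
  obtain ⟨i, hi, hin⟩ := mem_design.1 hn
  exact hi.ne (hx hin)

theorem design_mono {x : ℕ → E} {m n : ℕ} (h : m ≤ n) : design x m ⊆ design x n := by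
  intro p hp
  obtain ⟨i, hi, rfl⟩ := mem_design.1 hp
  exact apply_mem_design (hi.trans_le h)

theorem card_design_le (x : ℕ → E) (n : ℕ) : (design x n).card ≤ n := by
  classical
  exact Finset.card_image_le.trans (Finset.card_range n).le

end Design

section NormedGroup

variable {E : Type*} [NormedAddCommGroup E]

section MinDist

theorem minDist_le {D : Finset E} {p : E} (x : E) (hp : p ∈ D) : minDist D x ≤ dist x p :=
  csInf_le ⟨0, by rintro r ⟨q, _, rfl⟩; exact dist_nonneg⟩ ⟨p, hp, rfl⟩

theorem exists_minDist_eq_dist {D : Finset E} (hD : D.Nonempty) (x : E) :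
    ∃ p ∈ D, minDist D x = dist x p := by
  have hne : ((fun p => dist x p) '' (D : Set E)).Nonempty := (Finset.coe_nonempty.2 hD).image _
  obtain ⟨p, hp, hval⟩ := hne.csInf_mem (D.finite_toSet.image _)
  exact ⟨p, hp, hval.symm⟩

theorem minDist_anti {D D' : Finset E} (h : D ⊆ D') (hD : D.Nonempty) (x : E) :
    minDist D' x ≤ minDist D x := by
  obtain ⟨p, hp, hval⟩ := exists_minDist_eq_dist hD x
  exact hval ▸ minDist_le x (h hp)

end MinDist

section FillDist

variable {S : Set E} {D : Finset E}

theorem fillDist_nonneg (S : Set E) (D : Finset E) : 0 ≤ fillDist S D :=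
  Real.sSup_nonneg <| by
    rintro r ⟨z, _, rfl⟩
    exact Real.sInf_nonneg (by rintro r ⟨p, _, rfl⟩; exact dist_nonneg)

theorem minDist_le_fillDist (hS : Bornology.IsBounded S) (hD : D.Nonempty) {z : E}
    (hz : z ∈ S) : minDist D z ≤ fillDist S D := by
  refine le_csSup ?_ ⟨z, hz, rfl⟩
  obtain ⟨p, hp⟩ := hD
  obtain ⟨R, hR⟩ := hS.subset_closedBall p
  refine ⟨R, ?_⟩
  rintro r ⟨w, hw, rfl⟩
  exact (minDist_le w hp).trans (mem_closedBall.1 (hR hw))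

theorem fillDist_anti {D' : Finset E} (hS : Bornology.IsBounded S) (hD : D.Nonempty)
    (h : D ⊆ D') : fillDist S D' ≤ fillDist S D :=
  Real.sSup_le
    (by
      rintro r ⟨z, hz, rfl⟩
      exact (minDist_anti h hD z).trans (minDist_le_fillDist hS hD hz))
    (fillDist_nonneg S D)

theorem subset_biUnion_closedBall_fillDist (hS : Bornology.IsBounded S) (hD : D.Nonempty) :
    S ⊆ ⋃ p ∈ D, closedBall p (fillDist S D) := by
  intro z hz
  obtain ⟨p, hp, hval⟩ := exists_minDist_eq_dist hD z
  exact mem_biUnion hp (mem_closedBall.2 (hval ▸ minDist_le_fillDist hS hD hz))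

end FillDist

section SepRad

variable {D : Finset E}

theorem sepRad_nonneg (D : Finset E) : 0 ≤ sepRad D :=
  mul_nonneg (by norm_num) (Real.sInf_nonneg (by rintro r ⟨p, _, rfl⟩; exact dist_nonneg))

theorem sepRad_le {p q : E} (hp : p ∈ D) (hq : q ∈ D) (hne : p ≠ q) :
    sepRad D ≤ dist p q / 2 := by
  have : sInf ((fun p : E × E => dist p.1 p.2) '' {p | p.1 ∈ D ∧ p.2 ∈ D ∧ p.1 ≠ p.2})
      ≤ dist p q :=
    csInf_le ⟨0, by rintro r ⟨u, _, rfl⟩; exact dist_nonneg⟩ ⟨(p, q), ⟨hp, hq, hne⟩, rfl⟩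
  unfold sepRad
  linarith

theorem sepRad_pos {p q : E} (hp : p ∈ D) (hq : q ∈ D) (hne : p ≠ q) : 0 < sepRad D := by
  have hfin : {p : E × E | p.1 ∈ D ∧ p.2 ∈ D ∧ p.1 ≠ p.2}.Finite :=
    (D.finite_toSet.prod D.finite_toSet).subset fun u hu => ⟨hu.1, hu.2.1⟩
  have hne' : ((fun p : E × E => dist p.1 p.2) ''
      {p | p.1 ∈ D ∧ p.2 ∈ D ∧ p.1 ≠ p.2}).Nonempty := ⟨_, (p, q), ⟨hp, hq, hne⟩, rfl⟩
  obtain ⟨u, ⟨-, -, hu⟩, hval⟩ := hne'.csInf_mem (hfin.image _)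
  unfold sepRad
  rw [← hval]
  exact mul_pos (by norm_num) (dist_pos.2 hu)

theorem half_le_sepRad {p q : E} (hp : p ∈ D) (hq : q ∈ D) (hne : p ≠ q) {c : ℝ}
    (hc : ∀ p ∈ D, ∀ q ∈ D, p ≠ q → c ≤ dist p q) : c / 2 ≤ sepRad D := by
  have : c ≤ sInf ((fun p : E × E => dist p.1 p.2) '' {p | p.1 ∈ D ∧ p.2 ∈ D ∧ p.1 ≠ p.2}) := by
    refine le_csInf ⟨_, (p, q), ⟨hp, hq, hne⟩, rfl⟩ ?_
    rintro r ⟨⟨a, b⟩, ⟨ha, hb, hab⟩, rfl⟩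
    exact hc a ha b hb hab
  unfold sepRad
  linarith

theorem sepRad_le_minDist_div_two {D' : Finset E} (h : D ⊆ D') (hD : D.Nonempty) {p : E}
    (hp : p ∈ D') (hpD : p ∉ D) : sepRad D' ≤ minDist D p / 2 := by
  obtain ⟨q, hq, hval⟩ := exists_minDist_eq_dist hD p
  exact hval ▸ sepRad_le hp (h hq) (ne_of_mem_of_not_mem hq hpD).symm

end SepRad

section MeshRatio

variable {S : Set E} {D : Finset E} {b : ℝ}

theorem meshRatio_nonneg (S : Set E) (D : Finset E) : 0 ≤ meshRatio S D :=
  div_nonneg (fillDist_nonneg S D) (sepRad_nonneg D)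

theorem fillDist_le_of_meshRatio_le (h : meshRatio S D ≤ b) (hsep : 0 < sepRad D) :
    fillDist S D ≤ b * sepRad D := by
  rwa [meshRatio, div_le_iff₀ hsep] at h

theorem fillDist_le_div_two_mul_fillDist_of_meshRatio_le {D' : Finset E}
    (hS : Bornology.IsBounded S) (h : D ⊆ D') (hD : D.Nonempty) {p : E} (hp : p ∈ D')
    (hpS : p ∈ S) (hpD : p ∉ D) (hb : meshRatio S D' ≤ b) :
    fillDist S D' ≤ b / 2 * fillDist S D := by
  obtain ⟨q, hq⟩ := hD
  have hsep_pos : 0 < sepRad D' := sepRad_pos hp (h hq) (ne_of_mem_of_not_mem hq hpD).symm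
  have hb₀ : 0 ≤ b := (meshRatio_nonneg S D').trans hb
  calc fillDist S D' ≤ b * sepRad D' := fillDist_le_of_meshRatio_le hb hsep_pos
    _ ≤ b * (minDist D p / 2) := by gcongr; exact sepRad_le_minDist_div_two h ⟨q, hq⟩ hp hpD
    _ ≤ b * (fillDist S D / 2) := by gcongr; exact minDist_le_fillDist hS ⟨q, hq⟩ hpS
    _ = b / 2 * fillDist S D := by ring

end MeshRatio

/-- The argmax step of greedy packing, for `k ≥ 1`: a point of `S` at maximal distance from
`x 0, …, x (k - 1)` is one whose distance to them attains the fill distance. -/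
def IsGreedyPacking (S : Set E) (x : ℕ → E) : Prop :=
  ∀ k : ℕ, 1 ≤ k → x k ∈ S ∧ minDist (design x k) (x k) = fillDist S (design x k)

theorem fillDist_le_dist_of_isGreedyPacking {S : Set E} (hS : Bornology.IsBounded S)
    {x : ℕ → E} (hx : IsGreedyPacking S x) {i j n : ℕ} (hij : i < j) (hjn : j < n) :
    fillDist S (design x n) ≤ dist (x i) (x j) :=
  calc fillDist S (design x n) ≤ fillDist S (design x j) :=
        fillDist_anti hS ⟨x i, apply_mem_design hij⟩ (design_mono hjn.le)
    _ = minDist (design x j) (x j) := (hx j (by omega)).2.symm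
    _ ≤ dist (x j) (x i) := minDist_le _ (apply_mem_design hij)
    _ = dist (x i) (x j) := dist_comm _ _

theorem meshRatio_le_two_of_isGreedyPacking {S : Set E} (hS : Bornology.IsBounded S)
    {x : ℕ → E} (hx : IsGreedyPacking S x) (hinj : Function.Injective x) {n : ℕ} (hn : 2 ≤ n) :
    meshRatio S (design x n) ≤ 2 := by
  have h₀ : x 0 ∈ design x n := apply_mem_design (by omega)
  have h₁ : x 1 ∈ design x n := apply_mem_design (by omega)
  have h₀₁ : x 0 ≠ x 1 := hinj.ne zero_ne_one
  have hsep : fillDist S (design x n) / 2 ≤ sepRad (design x n) := by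
    refine half_le_sepRad h₀ h₁ h₀₁ ?_
    rintro _ hp _ hq hpq
    obtain ⟨i, hi, rfl⟩ := mem_design.1 hp
    obtain ⟨j, hj, rfl⟩ := mem_design.1 hq
    rcases lt_or_gt_of_ne (fun h : i = j => hpq (congrArg x h)) with hij | hji
    · exact fillDist_le_dist_of_isGreedyPacking hS hx hij hj
    · exact dist_comm (x j) (x i) ▸ fillDist_le_dist_of_isGreedyPacking hS hx hji hi
  rw [meshRatio, div_le_iff₀ (sepRad_pos h₀ h₁ h₀₁)]
  linarith

theorem fillDist_design_succ_le_pow {S : Set E} (hS : Bornology.IsBounded S) {y : ℕ → E}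
    (hy : Function.Injective y) (hyS : ∀ k, y k ∈ S) {b : ℝ}
    (hb : ∀ n : ℕ, 2 ≤ n → meshRatio S (design y n) ≤ b) (n : ℕ) :
    fillDist S (design y (n + 1)) ≤ (b / 2) ^ n * fillDist S (design y 1) := by
  induction n with
  | zero => simp
  | succ n ih =>
    have hb₀ : 0 ≤ b / 2 := div_nonneg ((meshRatio_nonneg _ _).trans (hb 2 le_rfl)) zero_le_two
    calc fillDist S (design y (n + 2)) ≤ b / 2 * fillDist S (design y (n + 1)) :=
          fillDist_le_div_two_mul_fillDist_of_meshRatio_le hS (design_mono n.succ.le_succ)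
            ⟨y 0, apply_mem_design n.succ_pos⟩ (apply_mem_design (n + 1).lt_succ_self) (hyS _)
            (apply_notMem_design hy _) (hb _ (by omega))
      _ ≤ b / 2 * ((b / 2) ^ n * fillDist S (design y 1)) := by gcongr
      _ = (b / 2) ^ (n + 1) * fillDist S (design y 1) := by ring

section Volume

variable [NormedSpace ℝ E] [FiniteDimensional ℝ E] [MeasurableSpace E] [BorelSpace E]

theorem measureReal_le_card_mul_fillDist_pow (μ : Measure E) [μ.IsAddHaarMeasure] {S : Set E}
    (hS : Bornology.IsBounded S) {D : Finset E} (hD : D.Nonempty) :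
    μ.real S ≤ D.card * fillDist S D ^ Module.finrank ℝ E * μ.real (closedBall 0 1) := by
  have hfin : μ (⋃ p ∈ D, closedBall p (fillDist S D)) ≠ ⊤ :=
    (D.isCompact_biUnion fun p _ => isCompact_closedBall p _).measure_lt_top.ne
  calc μ.real S ≤ μ.real (⋃ p ∈ D, closedBall p (fillDist S D)) :=
        measureReal_mono (subset_biUnion_closedBall_fillDist hS hD) hfin
    _ ≤ ∑ p ∈ D, μ.real (closedBall p (fillDist S D)) := measureReal_biUnion_finset_le _ _
    _ = D.card * fillDist S D ^ Module.finrank ℝ E * μ.real (closedBall 0 1) := by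
        simp only [μ.addHaar_real_closedBall' _ (fillDist_nonneg S D), Finset.sum_const,
          nsmul_eq_mul, mul_assoc]

theorem two_le_of_forall_meshRatio_le (μ : Measure E) [μ.IsAddHaarMeasure] {S : Set E}
    (hS : Bornology.IsBounded S) (hvol : 0 < μ S) {y : ℕ → E} (hy : Function.Injective y)
    (hyS : ∀ k, y k ∈ S) {b : ℝ} (hb : ∀ n : ℕ, 2 ≤ n → meshRatio S (design y n) ≤ b) :
    2 ≤ b := by
  by_contra! hb₂
  have : Nontrivial E := hy.nontrivial
  set k := Module.finrank ℝ E
  set q := b / 2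
  set F := fillDist S (design y 1)
  set β := μ.real (closedBall (0 : E) 1)
  have hq₀ : 0 ≤ q := div_nonneg ((meshRatio_nonneg _ _).trans (hb 2 le_rfl)) zero_le_two
  have hqk : q ^ k < 1 := pow_lt_one₀ hq₀ (by simp only [q]; linarith) Module.finrank_pos.ne'
  have hbound (n : ℕ) : μ.real S ≤ ((n : ℝ) + 1) * (q ^ k) ^ n * (F ^ k * β) :=
    calc μ.real S ≤ (design y (n + 1)).card * fillDist S (design y (n + 1)) ^ k * β :=
          measureReal_le_card_mul_fillDist_pow μ hS ⟨y 0, apply_mem_design n.succ_pos⟩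
      _ ≤ ((n : ℝ) + 1) * (q ^ n * F) ^ k * β := by
          have hfill₀ := fillDist_nonneg S (design y (n + 1))
          gcongr
          · exact_mod_cast card_design_le y (n + 1)
          · exact fillDist_design_succ_le_pow hS hy hyS hb n
      _ = ((n : ℝ) + 1) * (q ^ k) ^ n * (F ^ k * β) := by ring
  have hlim : Tendsto (fun n : ℕ => ((n : ℝ) + 1) * (q ^ k) ^ n * (F ^ k * β)) atTop (𝓝 0) := by
    simpa using (tendsto_succ_mul_pow_of_lt_one (by positivity) hqk).mul_const (F ^ k * β)
  have hpos : 0 < μ.real S := ENNReal.toReal_pos hvol.ne' hS.measure_lt_top.ne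
  exact (ge_of_tendsto' hlim hbound).not_gt hpos

end Volume

end NormedGroup

theorem statement9_general
    {E : Type*} [NormedAddCommGroup E] [NormedSpace ℝ E] [FiniteDimensional ℝ E]
    [MeasurableSpace E] [BorelSpace E]
    (S : Set E) (hS : IsCompact S) (hvol : 0 < (Measure.addHaar : Measure E) S)
    (x : ℕ → E) (hinj : Function.Injective x) (hx0 : x 0 ∈ S)
    (hgreedy : ∀ k : ℕ, 1 ≤ k →
      x k ∈ S ∧ minDist (design x k) (x k) = fillDist S (design x k)) :
    (∀ n : ℕ, 2 ≤ n → meshRatio S (design x n) ≤ 2) ∧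
    (∀ b : ℝ, (∀ n : ℕ, 2 ≤ n → meshRatio S (design x n) ≤ b) → 2 ≤ b) ∧
    (∀ y : ℕ → E, Function.Injective y → (∀ k, y k ∈ S) →
      ∀ b : ℝ, (∀ n : ℕ, 2 ≤ n → meshRatio S (design y n) ≤ b) → 2 ≤ b) := by
  have hxS : ∀ k, x k ∈ S := fun k =>
    k.eq_zero_or_pos.elim (fun hk => hk ▸ hx0) fun hk => (hgreedy k hk).1
  have hMR_ge (y : ℕ → E) (hy : Function.Injective y) (hyS : ∀ k, y k ∈ S) {b : ℝ}
      (hb : ∀ n : ℕ, 2 ≤ n → meshRatio S (design y n) ≤ b) : 2 ≤ b :=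
    two_le_of_forall_meshRatio_le _ hS.isBounded hvol hy hyS hb
  exact ⟨fun n hn => meshRatio_le_two_of_isGreedyPacking hS.isBounded hgreedy hinj hn,
    fun b hb => hMR_ge x hinj hxS hb, fun y hy hyS b hb => hMR_ge y hy hyS hb⟩

/-- Let `S ⊆ ℝ^d` be compact with `vol(S) > 0`. Any point sequence generated
by the greedy-packing algorithm is MR-optimal: its uniformity constant `sup_{n ≥ 2} MR(Xₙ)`
equals 2 (it is an upper bound, and no smaller bound works), and 2 is the minimum possible
uniformity constant over all point sequences in `S`. -/
theorem statement9 {d : ℕ} (hd : 1 ≤ d)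
    {E : Type*} [NormedAddCommGroup E] [NormedSpace ℝ E] [FiniteDimensional ℝ E]
    [MeasurableSpace E] [BorelSpace E] (hdim : Module.finrank ℝ E = d)
    (S : Set E) (hS : IsCompact S) (hvol : 0 < (Measure.addHaar : Measure E) S)
    (x : ℕ → E) (hinj : Function.Injective x) (hx0 : x 0 ∈ S)
    (hgreedy : ∀ k : ℕ, 1 ≤ k →
      x k ∈ S ∧ minDist (design x k) (x k) = fillDist S (design x k)) :
    (∀ n : ℕ, 2 ≤ n → meshRatio S (design x n) ≤ 2) ∧
    (∀ b : ℝ, (∀ n : ℕ, 2 ≤ n → meshRatio S (design x n) ≤ b) → 2 ≤ b) ∧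
    (∀ y : ℕ → E, Function.Injective y → (∀ k, y k ∈ S) →
      ∀ b : ℝ, (∀ n : ℕ, 2 ≤ n → meshRatio S (design y n) ≤ b) → 2 ≤ b) :=
  statement9_general S hS hvol x hinj hx0 hgreedy
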